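/- (Bounded differences for W^(λ)) Let μ be a probability measure, X = (X₁,…,X_m) and X' differ only in the j-th coordinate, with empirical measures μ̂ = (1/m)Σ δ_{Xᵢ} and μ̂' the empirical measure of X'. Then |W^(λ)(μ, μ̂) − W^(λ)(μ, μ̂')| ≤ min{d(X_j, X_j'), 2λ}/m. -/

import Mathlib

open MeasureTheory
open scoped ENNReal

/-- The robust Wasserstein distance `W^(λ)(μ,ν)`: the infimum over couplings `π`
of `μ` and `ν` of `∫ min (d x y) (2λ) dπ`. -/
noncomputable def robustW {X : Type*} [MetricSpace X] [MeasurableSpace X]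
    (l : ℝ) (μ ν : Measure X) : ℝ :=
  sInf {r : ℝ | ∃ π : Measure (X × X), IsProbabilityMeasure π ∧
    π.map Prod.fst = μ ∧ π.map Prod.snd = ν ∧
    r = ∫ p, min (dist p.1 p.2) (2 * l) ∂π}

/-! Replacing `x_j` by `x'_j` moves mass `1/m` of the empirical measure from `x_j` to `x'_j`.
Given any coupling `π` of `μ` and `μ̂`, cut out a piece `τ ≤ π` of mass `1/m` lying over `x_j`
and push it forward by `(a, x_j) ↦ (a, x'_j)`. The result is a coupling of `μ` and `μ̂'`, and by
the triangle inequality for the truncated metric `min d (2λ)` its cost exceeds that of `π` by at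
most `min (d(x_j, x'_j)) (2λ) / m`. Taking infima over `π`, and then exchanging the roles of
`x` and `x'`, gives the bound. -/

open Set

lemma min_dist_le_min_dist_add_min_dist {X : Type*} [PseudoMetricSpace X] {L : ℝ} (hL : 0 ≤ L)
    (a b c : X) : min (dist a c) L ≤ min (dist a b) L + min (dist b c) L := by
  have hac := dist_triangle a b c
  rcases min_cases (dist a b) L with ⟨h₁, -⟩ | ⟨h₁, -⟩ <;>
    rcases min_cases (dist b c) L with ⟨h₂, -⟩ | ⟨h₂, -⟩ <;> rw [h₁, h₂] <;>
    linarith [min_le_left (dist a c) L, min_le_right (dist a c) L, dist_nonneg (x := a) (y := b),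
      dist_nonneg (x := b) (y := c)]

namespace MeasureTheory.Measure

lemma exists_le_restrict_measure_univ_eq {α : Type*} [MeasurableSpace α] (π : Measure α)
    {A : Set α} (hA : π A ≠ ∞) {ε : ℝ≥0∞} (hε : ε ≤ π A) :
    ∃ τ ≤ π.restrict A, τ univ = ε := by
  refine ⟨(ε / π A) • π.restrict A, Measure.le_iff'.2 fun s => ?_, ?_⟩
  · rw [smul_apply, smul_eq_mul]
    exact mul_le_of_le_one_left zero_le (ENNReal.div_le_of_le_mul (by simpa using hε))
  · rw [smul_apply, restrict_apply_univ, smul_eq_mul]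
    rcases eq_or_ne (π A) 0 with h | h
    · simp [le_antisymm (h ▸ hε) zero_le, h]
    · exact ENNReal.div_mul_cancel h hA

end MeasureTheory.Measure

section Coupling

variable {X : Type*} [MeasurableSpace X]

structure IsCoupling (μ ν : Measure X) (π : Measure (X × X)) : Prop where
  isProbabilityMeasure : IsProbabilityMeasure π
  map_fst : π.map Prod.fst = μ
  map_snd : π.map Prod.snd = ν

lemma IsCoupling.prod (μ ν : Measure X) [IsProbabilityMeasure μ] [IsProbabilityMeasure ν] :
    IsCoupling μ ν (μ.prod ν) where
  isProbabilityMeasure := inferInstance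
  map_fst := by simp
  map_snd := by simp

end Coupling

section RobustCost

variable {X : Type*} [MetricSpace X]

def robustCost (l : ℝ) (p : X × X) : ℝ := min (dist p.1 p.2) (2 * l)

lemma continuous_robustCost (l : ℝ) : Continuous (robustCost (X := X) l) :=
  (continuous_fst.dist continuous_snd).min continuous_const

lemma robustCost_nonneg {l : ℝ} (hl : 0 ≤ l) (p : X × X) : 0 ≤ robustCost l p :=
  le_min dist_nonneg (by linarith)

lemma abs_robustCost_le (l : ℝ) (p : X × X) : |robustCost l p| ≤ |2 * l| :=
  abs_le.2 ⟨le_min ((neg_nonpos.2 (abs_nonneg _)).trans dist_nonneg) (neg_abs_le _),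
    (min_le_right _ _).trans (le_abs_self _)⟩

variable [MeasurableSpace X] [BorelSpace X] [SecondCountableTopology X]

lemma integrable_robustCost (l : ℝ) (π : Measure (X × X)) [IsFiniteMeasure π] :
    Integrable (robustCost l) π :=
  .of_bound (continuous_robustCost l).aestronglyMeasurable |2 * l|
    (ae_of_all _ fun p => abs_robustCost_le l p)

lemma integral_robustCost_map_le {l : ℝ} (hl : 0 ≤ l) {τ : Measure (X × X)} [IsFiniteMeasure τ]
    {y : X} (hτ : ∀ᵐ p ∂τ, p.2 = y) (z : X) :
    ∫ p, robustCost l p ∂(τ.map fun p => (p.1, z)) ≤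
      ∫ p, robustCost l p ∂τ + τ.real univ * min (dist y z) (2 * l) := by
  have hg : Measurable fun p : X × X => (p.1, z) := measurable_fst.prodMk measurable_const
  rw [integral_map hg.aemeasurable (continuous_robustCost l).aestronglyMeasurable,
    ← smul_eq_mul, ← integral_const, ← integral_add (integrable_robustCost l τ)
      (integrable_const _)]
  refine integral_mono_ae ((integrable_robustCost l _).comp_measurable hg)
    ((integrable_robustCost l τ).add (integrable_const _)) ?_
  filter_upwards [hτ] with ⟨a, b⟩ (rfl : b = y)
  exact min_dist_le_min_dist_add_min_dist (by linarith) a b z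

lemma integral_robustCost_sub_add_map_le {l : ℝ} (hl : 0 ≤ l) {π τ : Measure (X × X)}
    [IsFiniteMeasure π] (hτπ : τ ≤ π) {y : X} (hτ : ∀ᵐ p ∂τ, p.2 = y) (z : X) :
    ∫ p, robustCost l p ∂(π - τ + τ.map fun p => (p.1, z)) ≤
      ∫ p, robustCost l p ∂π + τ.real univ * min (dist y z) (2 * l) := by
  have : IsFiniteMeasure τ := isFiniteMeasure_of_le π hτπ
  have hint (ρ : Measure (X × X)) [IsFiniteMeasure ρ] := integrable_robustCost l ρ
  conv_rhs => rw [← Measure.sub_add_cancel_of_le hτπ, integral_add_measure (hint _) (hint _)]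
  rw [integral_add_measure (hint _) (hint _), add_assoc]
  gcongr
  exact integral_robustCost_map_le hl hτ z

end RobustCost

section RobustW

variable {X : Type*} [MetricSpace X] [MeasurableSpace X] {l : ℝ} {μ ν : Measure X}

lemma robustW_le_integral (hl : 0 ≤ l) {π : Measure (X × X)} (hπ : IsCoupling μ ν π) :
    robustW l μ ν ≤ ∫ p, robustCost l p ∂π :=
  csInf_le ⟨0, by rintro r ⟨π', -, -, -, rfl⟩; exact integral_nonneg (robustCost_nonneg hl)⟩
    ⟨π, hπ.isProbabilityMeasure, hπ.map_fst, hπ.map_snd, rfl⟩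

lemma le_robustW {a : ℝ} (hne : ∃ π, IsCoupling μ ν π)
    (h : ∀ π, IsCoupling μ ν π → a ≤ ∫ p, robustCost l p ∂π) : a ≤ robustW l μ ν := by
  obtain ⟨π, hπ⟩ := hne
  exact le_csInf ⟨_, π, hπ.isProbabilityMeasure, hπ.map_fst, hπ.map_snd, rfl⟩
    (by rintro r ⟨π', h₁, h₂, h₃, rfl⟩; exact h π' ⟨h₁, h₂, h₃⟩)

variable [BorelSpace X] [SecondCountableTopology X]

theorem IsCoupling.exists_integral_le_of_add_dirac_eq (hl : 0 ≤ l) {π : Measure (X × X)}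
    (hπ : IsCoupling μ ν π) {ν' : Measure X} {y z : X} {ε : ℝ≥0∞} (hε : ε ≤ ν {y})
    (hν' : ν' + ε • Measure.dirac y = ν + ε • Measure.dirac z) :
    ∃ π', IsCoupling μ ν' π' ∧
      ∫ p, robustCost l p ∂π' ≤ ∫ p, robustCost l p ∂π + ε.toReal * min (dist y z) (2 * l) := by
  have := hπ.isProbabilityMeasure
  have hA : MeasurableSet (Prod.snd ⁻¹' {y} : Set (X × X)) :=
    measurable_snd (measurableSet_singleton y)
  have hπA : π (Prod.snd ⁻¹' {y}) = ν {y} := by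
    rw [← hπ.map_snd, Measure.map_apply measurable_snd (measurableSet_singleton y)]
  obtain ⟨τ, hτA, hτ⟩ :=
    π.exists_le_restrict_measure_univ_eq (measure_ne_top _ _) (hε.trans_eq hπA.symm)
  have hτπ : τ ≤ π := hτA.trans Measure.restrict_le_self
  have : IsFiniteMeasure τ := isFiniteMeasure_of_le π hτπ
  have hτy : ∀ᵐ p ∂τ, p.2 = y := Measure.absolutelyContinuous_of_le hτA (ae_restrict_mem hA)
  -- `π' := (π - τ) + g_* τ` redirects the part `τ` of `π` lying over `y` to `z`.
  set g : X × X → X × X := fun p => (p.1, z)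
  have hg : Measurable g := measurable_fst.prodMk measurable_const
  have hπτ : π - τ + τ = π := Measure.sub_add_cancel_of_le hτπ
  have hfst : (π - τ + τ.map g).map Prod.fst = μ := by
    rw [Measure.map_add _ _ measurable_fst, Measure.map_map measurable_fst hg,
      show Prod.fst ∘ g = Prod.fst from rfl, ← Measure.map_add _ _ measurable_fst, hπτ, hπ.map_fst]
  have hsnd : (π - τ + τ.map g).map Prod.snd = ν' := by
    refine (Measure.add_left_inj (τ.map Prod.snd) _ _).1 ?_
    calc (π - τ + τ.map g).map Prod.snd + τ.map Prod.snd
        = (π - τ + τ).map Prod.snd + (τ.map g).map Prod.snd := by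
          simp only [Measure.map_add _ _ measurable_snd]; abel
      _ = ν + ε • Measure.dirac z := by
          rw [hπτ, hπ.map_snd, Measure.map_map measurable_snd hg,
            show Prod.snd ∘ g = fun _ => z from rfl, Measure.map_const, hτ]
      _ = ν' + τ.map Prod.snd := by
          rw [Measure.map_congr hτy, Measure.map_const, hτ, hν']
  refine ⟨π - τ + τ.map g, ⟨⟨?_⟩, hfst, hsnd⟩, ?_⟩
  · rw [Measure.add_apply, Measure.map_apply hg .univ, preimage_univ, ← Measure.add_apply, hπτ,
      measure_univ]
  · simpa only [measureReal_def, hτ] using integral_robustCost_sub_add_map_le hl hτπ hτy z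

theorem robustW_le_add_of_add_dirac_eq (hl : 0 ≤ l) [IsProbabilityMeasure μ]
    [IsProbabilityMeasure ν] {ν' : Measure X} {y z : X} {ε : ℝ≥0∞} (hε : ε ≤ ν {y})
    (hν' : ν' + ε • Measure.dirac y = ν + ε • Measure.dirac z) :
    robustW l μ ν' ≤ robustW l μ ν + ε.toReal * min (dist y z) (2 * l) := by
  have key : robustW l μ ν' - ε.toReal * min (dist y z) (2 * l) ≤ robustW l μ ν :=
    le_robustW ⟨_, .prod μ ν⟩ fun π hπ => by
      obtain ⟨π', hπ', hcost⟩ := hπ.exists_integral_le_of_add_dirac_eq hl hε hν'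
      linarith [robustW_le_integral hl hπ']
  linarith

end RobustW

section Empirical

variable {X : Type*} [MeasurableSpace X] {m : ℕ}

noncomputable def empiricalMeasure (x : Fin m → X) : Measure X :=
  (m : ℝ≥0∞)⁻¹ • ∑ i, Measure.dirac (x i)

lemma isProbabilityMeasure_empiricalMeasure (hm : 0 < m) (x : Fin m → X) :
    IsProbabilityMeasure (empiricalMeasure x) :=
  ⟨by simp [empiricalMeasure, ENNReal.inv_mul_cancel (Nat.cast_ne_zero.2 hm.ne')]⟩

lemma inv_le_empiricalMeasure_singleton (x : Fin m → X) (j : Fin m) :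
    (m : ℝ≥0∞)⁻¹ ≤ empiricalMeasure x {x j} := by
  rw [empiricalMeasure, Measure.smul_apply, Measure.finsetSum_apply, smul_eq_mul]
  refine le_mul_of_one_le_right' ?_
  calc (1 : ℝ≥0∞) = Measure.dirac (x j) {x j} :=
        (Measure.dirac_apply_of_mem (mem_singleton _)).symm
    _ ≤ ∑ i, Measure.dirac (x i) {x j} :=
      Finset.single_le_sum (f := fun i => Measure.dirac (x i) {x j}) (fun _ _ => zero_le)
        (Finset.mem_univ j)

lemma empiricalMeasure_add_dirac_eq {x x' : Fin m → X} {j : Fin m}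
    (h : ∀ i, i ≠ j → x i = x' i) :
    empiricalMeasure x' + (m : ℝ≥0∞)⁻¹ • Measure.dirac (x j) =
      empiricalMeasure x + (m : ℝ≥0∞)⁻¹ • Measure.dirac (x' j) := by
  simp only [empiricalMeasure, ← smul_add]
  rw [← Finset.sum_erase_add _ _ (Finset.mem_univ j),
    ← Finset.sum_erase_add _ (fun i => Measure.dirac (x i)) (Finset.mem_univ j),
    Finset.sum_congr rfl fun i hi => congrArg Measure.dirac (h i (Finset.ne_of_mem_erase hi)),
    add_right_comm]

end Empirical

theorem robustW_bounded_differences_general {X : Type*} [MetricSpace X] [PolishSpace X]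
    [MeasurableSpace X] [BorelSpace X] (l : ℝ) (hl : 0 < l)
    (m : ℕ) (x x' : Fin m → X) (j : Fin m)
    (hdiff : ∀ i : Fin m, i ≠ j → x i = x' i)
    (μ : Measure X) [IsProbabilityMeasure μ]
    (μhat μhat' : Measure X)
    (hμhat : μhat = ((m : ℝ≥0∞))⁻¹ • ∑ i : Fin m, Measure.dirac (x i))
    (hμhat' : μhat' = ((m : ℝ≥0∞))⁻¹ • ∑ i : Fin m, Measure.dirac (x' i)) :
    |robustW l μ μhat - robustW l μ μhat'| ≤ min (dist (x j) (x' j)) (2 * l) / m := by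
  obtain rfl : μhat = empiricalMeasure x := hμhat
  obtain rfl : μhat' = empiricalMeasure x' := hμhat'
  have := isProbabilityMeasure_empiricalMeasure j.pos x
  have := isProbabilityMeasure_empiricalMeasure j.pos x'
  have hε : ((m : ℝ≥0∞)⁻¹).toReal = (m : ℝ)⁻¹ := by simp
  have h₁ := robustW_le_add_of_add_dirac_eq (μ := μ) hl.le
    (inv_le_empiricalMeasure_singleton x j) (empiricalMeasure_add_dirac_eq hdiff)
  have h₂ := robustW_le_add_of_add_dirac_eq (μ := μ) hl.le
    (inv_le_empiricalMeasure_singleton x' j)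
    (empiricalMeasure_add_dirac_eq fun i hi => (hdiff i hi).symm)
  rw [hε] at h₁ h₂
  rw [dist_comm] at h₂
  rw [div_eq_inv_mul, abs_sub_le_iff]
  exact ⟨by linarith, by linarith⟩

/-- Bounded differences for `W^(λ)`: if the samples `x` and `x'` differ only in
the `j`-th coordinate, then the robust Wasserstein distances of their empirical
measures to `μ` differ by at most `min (d(x_j, x'_j)) (2λ) / m`. -/
theorem robustW_bounded_differences {X : Type*} [MetricSpace X] [PolishSpace X]
    [MeasurableSpace X] [BorelSpace X] (l : ℝ) (hl : 0 < l)
    (m : ℕ) (hm : 0 < m) (x x' : Fin m → X) (j : Fin m)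
    (hdiff : ∀ i : Fin m, i ≠ j → x i = x' i)
    (μ : Measure X) [IsProbabilityMeasure μ]
    (μhat μhat' : Measure X)
    (hμhat : μhat = ((m : ℝ≥0∞))⁻¹ • ∑ i : Fin m, Measure.dirac (x i))
    (hμhat' : μhat' = ((m : ℝ≥0∞))⁻¹ • ∑ i : Fin m, Measure.dirac (x' i)) :
    |robustW l μ μhat - robustW l μ μhat'| ≤ min (dist (x j) (x' j)) (2 * l) / m :=
  robustW_bounded_differences_general l hl m x x' j hdiff μ μhat μhat' hμhat hμhat'
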